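/- Any valid annotation of an automaton on a cutpoint set K can be extended to a valid full annotation, i.e., a valid annotation whose cutpoint set is all of Ctrl, agreeing with the original on K. -/

import Mathlib

/-- An automaton with control points `C` and data stores `S`. -/
structure Automaton (C S : Type) where
  init : C
  fin : C
  step : C × S → C × S → Prop

namespace Automaton

variable {C S : Type}

/-- A trace: a nonempty list of states consecutive under the transition relation. -/
def IsTrace (A : Automaton C S) (τ : List (C × S)) : Prop :=
  τ ≠ [] ∧ List.Chain' A.step τ

/-- An initial trace starts at control point `init`. -/
def InitTrace (A : Automaton C S) (τ : List (C × S)) : Prop :=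
  A.IsTrace τ ∧ ∃ s, τ.head? = some (A.init, s)

/-- Basic semantics of unary specs: every finite initial trace from a `P`-store
that ends at control `fin` ends in a `Q`-store. -/
def Sat (A : Automaton C S) (P Q : S → Prop) : Prop :=
  ∀ τ s₀ n sl, A.InitTrace τ → τ.head? = some (A.init, s₀) → P s₀ →
    τ.getLast? = some (n, sl) → n = A.fin → Q sl

/-- Edge of the control-flow graph. -/
def Edge (A : Automaton C S) (n m : C) : Prop := ∃ s t, A.step (n, s) (m, t)

/-- A cutpoint set contains `init` and `fin` and cuts every CFG cycle. -/
def IsCutset (A : Automaton C S) (K : Set C) : Prop :=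
  A.init ∈ K ∧ A.fin ∈ K ∧
  ∀ vs : List C, List.Chain' A.Edge vs → 1 < vs.length →
    vs.head? = vs.getLast? → ∃ v ∈ vs, v ∈ K

/-- A segment: a CFG path of length > 1 with endpoints in `K` and no
intermediate cutpoints. -/
def IsSeg (A : Automaton C S) (K : Set C) (vs : List C) : Prop :=
  List.Chain' A.Edge vs ∧ 1 < vs.length ∧
  (∃ h, vs.head? = some h ∧ h ∈ K) ∧
  (∃ l, vs.getLast? = some l ∧ l ∈ K) ∧
  ∀ i (hi : i < vs.length), 0 < i → i + 1 < vs.length → vs.get ⟨i, hi⟩ ∉ K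

/-- The control path of a trace. -/
def cpath (τ : List (C × S)) : List C := τ.map Prod.fst

/-- Validity of an annotation: every verification condition along segments
between cutpoints holds. -/
def ValidAnno (A : Automaton C S) (K : Set C) (an : C → S → Prop) : Prop :=
  ∀ vs τ α ω s t, A.IsSeg K vs → A.IsTrace τ → cpath τ = vs →
    τ.head? = some (α, s) → τ.getLast? = some (ω, t) → an α s → an ω t


end Automaton

/-! Extend `an` by its strongest postcondition along traces that start at a cutpoint and visit no
further cutpoint. At a cutpoint such a trace is trivial, so the extension agrees with `an` on `K`.
A CFG edge into a cutpoint completes such a trace to a segment of `K`, where validity of `an`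
applies; an edge into a non-cutpoint merely prolongs the trace. -/

namespace Automaton

variable {C S : Type} (A : Automaton C S)

lemma isChain_edge_cpath {τ : List (C × S)} (h : List.IsChain A.step τ) :
    List.IsChain A.Edge (cpath τ) :=
  List.isChain_map_of_isChain Prod.fst (fun p q hpq => ⟨p.2, q.2, hpq⟩) h

lemma IsSeg.length_eq_two {vs : List C} (h : A.IsSeg Set.univ vs) : vs.length = 2 := by
  obtain ⟨-, hlen, -, -, hinner⟩ := h
  by_contra hne
  exact hinner 1 (by omega) one_pos (by omega) (Set.mem_univ _)

lemma validAnno_univ_of_step {an : C → S → Prop}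
    (h : ∀ p q, A.step p q → an p.1 p.2 → an q.1 q.2) : A.ValidAnno Set.univ an := by
  intro vs τ α ω s t hseg htr hcp hhead hlast
  have hτ : τ.length = 2 := by
    rw [← hseg.length_eq_two, ← hcp, cpath, List.length_map]
  obtain ⟨a, b, rfl⟩ := List.length_eq_two.mp hτ
  cases Option.some.inj hhead
  cases Option.some.inj hlast
  exact h _ _ (List.isChain_pair.mp htr.2)

lemma isSeg_cons_append_singleton {K : Set C} {k m : C} {mid : List C} (hk : k ∈ K) (hm : m ∈ K)
    (hmid : ∀ c ∈ mid, c ∉ K) (h : List.IsChain A.Edge (k :: (mid ++ [m]))) :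
    A.IsSeg K (k :: (mid ++ [m])) := by
  have hlen : (k :: (mid ++ [m])).length = mid.length + 2 := by simp
  refine ⟨h, by omega, ⟨k, rfl, hk⟩, ⟨m, by rw [← List.cons_append, List.getLast?_concat], hm⟩,
    fun i hi hi0 hilt => ?_⟩
  obtain ⟨j, rfl⟩ := Nat.exists_eq_add_of_lt hi0
  have hj : j < mid.length := by omega
  simpa [List.getElem_append_left hj] using hmid _ (List.getElem_mem hj)

def postAvoiding (K : Set C) (an : C → S → Prop) (n : C) (s : S) : Prop :=
  ∃ k s₀ ρ, k ∈ K ∧ an k s₀ ∧ List.IsChain A.step ((k, s₀) :: ρ) ∧ (∀ c ∈ cpath ρ, c ∉ K) ∧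
    ((k, s₀) :: ρ).getLast? = some (n, s)

lemma postAvoiding_of_mem {K : Set C} {an : C → S → Prop} {n : C} (hn : n ∈ K) :
    A.postAvoiding K an n = an n := by
  funext s
  refine propext ⟨fun ⟨k, s₀, ρ, _, hk, _, hρ, hlast⟩ => ?_,
    fun h => ⟨n, s, [], hn, h, .singleton _, by simp [cpath], rfl⟩⟩
  cases ρ with
  | nil =>
    cases Option.some.inj hlast
    exact hk
  | cons p ρ =>
    rw [List.getLast?_cons_cons] at hlast
    exact absurd hn (hρ n (List.mem_map_of_mem (f := Prod.fst) (List.mem_of_getLast? hlast)))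

lemma postAvoiding_step {K : Set C} {an : C → S → Prop} (hvalid : A.ValidAnno K an)
    {n m : C} {s t : S} (hst : A.step (n, s) (m, t)) (h : A.postAvoiding K an n s) :
    A.postAvoiding K an m t := by
  obtain ⟨k, s₀, ρ, hk, hks₀, hchain, hρ, hlast⟩ := h
  have hchain' : List.IsChain A.step ((k, s₀) :: (ρ ++ [(m, t)])) := by
    rw [← List.cons_append]
    exact hchain.append (.singleton _) (by simpa [hlast] using hst)
  have hlast' : ((k, s₀) :: (ρ ++ [(m, t)])).getLast? = some (m, t) := by
    rw [← List.cons_append, List.getLast?_concat]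
  by_cases hm : m ∈ K
  · rw [A.postAvoiding_of_mem hm]
    have hcp : cpath ((k, s₀) :: (ρ ++ [(m, t)])) = k :: (cpath ρ ++ [m]) := by simp [cpath]
    refine hvalid _ _ k m s₀ t (A.isSeg_cons_append_singleton hk hm hρ ?_) ⟨by simp, hchain'⟩
      hcp rfl hlast' hks₀
    exact hcp ▸ A.isChain_edge_cpath hchain'
  · refine ⟨k, s₀, ρ ++ [(m, t)], hk, hks₀, hchain', fun c hc => ?_, hlast'⟩
    simp only [cpath, List.map_append, List.map_cons, List.map_nil, List.mem_append,
      List.mem_singleton] at hc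
    exact hc.elim (hρ c) (· ▸ hm)

end Automaton

open Automaton

theorem extend_valid_annotation_general {C S : Type}
    (A : Automaton C S) (K : Set C) (an : C → S → Prop)
    (hvalid : A.ValidAnno K an) :
    ∃ an' : C → S → Prop, (∀ n ∈ K, an' n = an n) ∧
      A.ValidAnno Set.univ an' :=
  ⟨A.postAvoiding K an, fun _ hn => A.postAvoiding_of_mem hn,
    A.validAnno_univ_of_step fun _ _ hst => A.postAvoiding_step hvalid hst⟩

/-- **Extension of valid annotations**: any valid annotation on a cutpoint set
`K` can be extended to a valid full annotation (whose cutpoint set is all of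
`Ctrl`), agreeing with the original on `K`. -/
theorem extend_valid_annotation {C S : Type} [Finite C]
    (A : Automaton C S) (K : Set C) (an : C → S → Prop)
    (hne : A.init ≠ A.fin)
    (hfinality : ∀ p q, A.step p q → p.1 ≠ A.fin)
    (hnonstutter : ∀ p q, A.step p q → p.1 ≠ q.1)
    (hK : A.IsCutset K)
    (hvalid : A.ValidAnno K an) :
    ∃ an' : C → S → Prop, (∀ n ∈ K, an' n = an n) ∧
      A.ValidAnno Set.univ an' :=
  extend_valid_annotation_general A K an hvalid
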